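/- (LVR averaged bound) With f_i = f(x_i) = g(Wx_i), x_i ≠ 0, define dV = (1/n) Σ_i sqrt(det(∇_x f_i (∇_x f_i)ᵀ)) and S = (1/n) Σ_i ‖∇_W f_i‖_F^2. Then for all integers N ≥ 1 (N the output dimension), dV ≤ (1/n) sqrt(Σ_i ‖W‖_2^{2N}/‖x_i‖_2^{2N}) · (n S / N)^{N/2}. -/

import Mathlib

open Matrix

/-- The Frobenius norm of a real matrix. -/
noncomputable def frobNorm {m n : Type*} [Fintype m] [Fintype n]
    (A : Matrix m n ℝ) : ℝ :=
  Real.sqrt (∑ i, ∑ j, (A i j) ^ 2)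

/-- The spectral (operator) norm of a real matrix. -/
noncomputable def specNorm {m n : Type*} [Fintype m] [Fintype n] [DecidableEq n]
    (A : Matrix m n ℝ) : ℝ :=
  ‖LinearMap.toContinuousLinearMap (Matrix.toEuclideanLin A)‖

section Helpers

open scoped Matrix.Norms.L2Operator

lemma specNorm_eq {m n : Type*} [Fintype m] [Fintype n] [DecidableEq n]
    (A : Matrix m n ℝ) : specNorm A = ‖A‖ := rfl

lemma frobNorm_nonneg {m n : Type*} [Fintype m] [Fintype n] (A : Matrix m n ℝ) :
    0 ≤ frobNorm A := Real.sqrt_nonneg _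

lemma frobNorm_sq {m n : Type*} [Fintype m] [Fintype n] (A : Matrix m n ℝ) :
    frobNorm A ^ 2 = ∑ i, ∑ j, (A i j) ^ 2 :=
  Real.sq_sqrt (by positivity)

lemma my_trace_eq_sum_eigenvalues {k : ℕ} {A : Matrix (Fin k) (Fin k) ℝ} (hA : A.IsHermitian) :
    A.trace = ∑ i, hA.eigenvalues i := by
  conv_lhs => rw [hA.spectral_theorem, Unitary.conjStarAlgAut_apply, trace_mul_cycle]
  rw [Unitary.coe_star_mul_self, one_mul]
  simp [Matrix.trace_diagonal]

lemma my_sqrt_pow_eq {u : ℝ} (hu : 0 ≤ u) (N : ℕ) :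
    Real.sqrt (u ^ N) = u ^ ((N : ℝ) / 2) := by
  rw [Real.sqrt_eq_rpow, ← Real.rpow_natCast u N, ← Real.rpow_mul hu]
  rw [mul_one_div]

lemma my_sum_pow_le {ι : Type*} (s : Finset ι) (f : ι → ℝ) (hf : ∀ i ∈ s, 0 ≤ f i)
    {N : ℕ} (hN : 1 ≤ N) :
    ∑ i ∈ s, f i ^ N ≤ (∑ i ∈ s, f i) ^ N := by
  have hS : ∀ i ∈ s, f i ≤ ∑ j ∈ s, f j := fun i hi => Finset.single_le_sum hf hi
  have hS0 : 0 ≤ ∑ j ∈ s, f j := Finset.sum_nonneg hf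
  calc ∑ i ∈ s, f i ^ N ≤ ∑ i ∈ s, f i * (∑ j ∈ s, f j) ^ (N - 1) := by
        refine Finset.sum_le_sum fun i hi => ?_
        have : f i ^ N = f i * f i ^ (N - 1) := by
          rw [← pow_succ']
          congr 1
          omega
        rw [this]
        exact mul_le_mul_of_nonneg_left (pow_le_pow_left₀ (hf i hi) (hS i hi) _) (hf i hi)
    _ = (∑ j ∈ s, f j) ^ N := by
        rw [← Finset.sum_mul, ← pow_succ']
        congr 1
        omega

lemma my_amgm {k : ℕ} (hk : 1 ≤ k) (z : Fin k → ℝ) (hz : ∀ i, 0 ≤ z i) :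
    ∏ i, z i ≤ ((∑ i, z i) / k) ^ k := by
  have hk0 : (k : ℝ) ≠ 0 := Nat.cast_ne_zero.mpr (by omega)
  have h := Real.geom_mean_le_arith_mean_weighted Finset.univ (fun _ => (k : ℝ)⁻¹) z
    (fun _ _ => by positivity)
    (by simp [Finset.card_univ]; field_simp)
    (fun i _ => hz i)
  have hprod : (∏ i, z i ^ ((k : ℝ)⁻¹)) ^ k = ∏ i, z i := by
    rw [← Finset.prod_pow]
    refine Finset.prod_congr rfl fun i _ => ?_
    rw [← Real.rpow_natCast (z i ^ ((k:ℝ)⁻¹)) k, ← Real.rpow_mul (hz i),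
      inv_mul_cancel₀ hk0, Real.rpow_one]
  calc ∏ i, z i = (∏ i, z i ^ ((k : ℝ)⁻¹)) ^ k := hprod.symm
    _ ≤ (∑ i, (k : ℝ)⁻¹ * z i) ^ k := by
        refine pow_le_pow_left₀ (Finset.prod_nonneg fun i _ => ?_) h k
        exact Real.rpow_nonneg (hz i) _
    _ = ((∑ i, z i) / k) ^ k := by
        rw [← Finset.mul_sum]
        ring_nf

lemma my_det_le {N d : ℕ} (hN : 1 ≤ N) (A : Matrix (Fin N) (Fin d) ℝ) :
    (A * Aᵀ).det ≤ (frobNorm A ^ 2 / N) ^ N := by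
  have hps : (A * Aᵀ).PosSemidef := by
    simpa using Matrix.posSemidef_self_mul_conjTranspose A
  have hH := hps.isHermitian
  have htr : (A * Aᵀ).trace = frobNorm A ^ 2 := by
    rw [frobNorm_sq]
    simp [Matrix.trace, Matrix.diag, Matrix.mul_apply, sq]
  have hdet : (A * Aᵀ).det = ∏ i, hH.eigenvalues i := by
    simpa using hH.det_eq_prod_eigenvalues
  rw [hdet, ← htr, my_trace_eq_sum_eigenvalues hH]
  exact my_amgm hN _ fun i => hps.eigenvalues_nonneg i

lemma euclid_norm_sq {k : Type*} [Fintype k] (v : EuclideanSpace ℝ k) :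
    ‖v‖ ^ 2 = ∑ j, v j ^ 2 := by
  rw [EuclideanSpace.norm_eq, Real.sq_sqrt (by positivity)]
  simp [sq_abs]

lemma frobNorm_mul_le {a b c : Type*} [Fintype a] [Fintype b] [Fintype c] [DecidableEq b]
    [DecidableEq c]
    (A : Matrix a b ℝ) (B : Matrix b c ℝ) :
    frobNorm (A * B) ≤ frobNorm A * specNorm B := by
  have key : ∑ i, ∑ j, ((A * B) i j) ^ 2 ≤ (frobNorm A * specNorm B) ^ 2 := by
    have hrow : ∀ i : a, ∑ j, ((A * B) i j) ^ 2 ≤ specNorm B ^ 2 * ∑ k, (A i k) ^ 2 := by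
      intro i
      set v : EuclideanSpace ℝ b := (WithLp.equiv 2 (b → ℝ)).symm (A i) with hv
      have hle : ‖(EuclideanSpace.equiv c ℝ).symm (Bᵀ *ᵥ A i)‖ ≤ ‖Bᵀ‖ * ‖v‖ :=
        Matrix.l2_opNorm_mulVec Bᵀ v
      have hBt : ‖Bᵀ‖ = specNorm B := by
        have hct : Bᴴ = Bᵀ := by ext i j; simp [Matrix.conjTranspose_apply]
        rw [specNorm_eq, ← Matrix.l2_opNorm_conjTranspose B, hct]
      have hsq : ∑ j, ((A * B) i j) ^ 2 = ‖(EuclideanSpace.equiv c ℝ).symm (Bᵀ *ᵥ A i)‖ ^ 2 := by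
        rw [euclid_norm_sq]
        refine Finset.sum_congr rfl fun j _ => ?_
        simp [Matrix.mul_apply, Matrix.mulVec, dotProduct, Matrix.transpose_apply,
          mul_comm]
      have hvn : ‖v‖ ^ 2 = ∑ k, (A i k) ^ 2 := by
        rw [euclid_norm_sq]
        rfl
      rw [hsq, ← hvn]
      calc ‖(EuclideanSpace.equiv c ℝ).symm (Bᵀ *ᵥ A i)‖ ^ 2 ≤ (‖Bᵀ‖ * ‖v‖) ^ 2 := by
            apply pow_le_pow_left₀ (norm_nonneg _) hle
        _ = specNorm B ^ 2 * ‖v‖ ^ 2 := by rw [hBt]; ring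
    calc ∑ i, ∑ j, ((A * B) i j) ^ 2 ≤ ∑ i, specNorm B ^ 2 * ∑ k, (A i k) ^ 2 :=
          Finset.sum_le_sum fun i _ => hrow i
      _ = (frobNorm A * specNorm B) ^ 2 := by
          rw [← Finset.mul_sum, mul_pow, frobNorm_sq]
          ring
  have h0 : 0 ≤ frobNorm A * specNorm B :=
    mul_nonneg (frobNorm_nonneg _) (norm_nonneg _)
  calc frobNorm (A * B) = Real.sqrt (∑ i, ∑ j, ((A * B) i j) ^ 2) := rfl
    _ ≤ Real.sqrt ((frobNorm A * specNorm B) ^ 2) := Real.sqrt_le_sqrt key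
    _ = frobNorm A * specNorm B := Real.sqrt_sq h0

end Helpers

/-- LVR averaged bound: with `fᵢ = g (W xᵢ)`, `xᵢ ≠ 0`, Jacobians `∇ₓ fᵢ = Jᵢ W`
and `‖∇_W fᵢ‖_F = ‖Jᵢ‖_F ‖xᵢ‖₂`, the mean local volumetric ratio
`dV = (1/n) ∑ᵢ sqrt (det (∇ₓ fᵢ (∇ₓ fᵢ)ᵀ))` satisfies, for the output
dimension `N ≥ 1` and `S = (1/n) ∑ᵢ ‖∇_W fᵢ‖_F²`,
`dV ≤ (1/n) sqrt (∑ᵢ ‖W‖₂^{2N}/‖xᵢ‖₂^{2N}) · (n S / N)^{N/2}`. -/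
theorem lvr_averaged_bound {n d M N : ℕ} (hN : 1 ≤ N)
    (W : Matrix (Fin d) (Fin M) ℝ)
    (x : Fin n → EuclideanSpace ℝ (Fin M)) (hx : ∀ i, x i ≠ 0)
    (J : Fin n → Matrix (Fin N) (Fin d) ℝ) :
    (1 / (n : ℝ)) * ∑ i, Real.sqrt ((J i * W) * (J i * W)ᵀ).det ≤
      (1 / (n : ℝ)) * Real.sqrt (∑ i, specNorm W ^ (2 * N) / ‖x i‖ ^ (2 * N)) *
        ((n : ℝ) * ((1 / (n : ℝ)) * ∑ i, (frobNorm (J i) * ‖x i‖) ^ 2) / (N : ℝ))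
          ^ ((N : ℝ) / 2) := by
  rcases Nat.eq_zero_or_pos n with hn | hn
  · subst hn
    simp
  have hn0 : (n : ℝ) ≠ 0 := Nat.cast_ne_zero.mpr (by omega)
  have hNR : (0 : ℝ) < (N : ℝ) := by exact_mod_cast hN
  have hs0 : 0 ≤ specNorm W := norm_nonneg _
  set s : ℝ := specNorm W with hs
  set K : ℝ := (N : ℝ) ^ ((N : ℝ) / 2) with hKdef
  have hKpos : 0 < K := Real.rpow_pos_of_pos hNR _
  set a : Fin n → ℝ := fun i => s ^ N / ‖x i‖ ^ N with ha
  set b : Fin n → ℝ := fun i => (frobNorm (J i) * ‖x i‖) ^ N with hb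
  set T : ℝ := ∑ i, (frobNorm (J i) * ‖x i‖) ^ 2 with hT
  have hT0 : 0 ≤ T := Finset.sum_nonneg fun i _ => by positivity
  have ha0 : ∀ i, 0 ≤ a i := fun i => by
    have := norm_nonneg (x i); positivity
  have hb0 : ∀ i, 0 ≤ b i := fun i => by
    have := frobNorm_nonneg (J i); positivity
  -- pointwise bound
  have claim1 : ∀ i, Real.sqrt ((J i * W) * (J i * W)ᵀ).det ≤ a i * b i / K := by
    intro i
    have hxi : ‖x i‖ ≠ 0 := norm_ne_zero_iff.mpr (hx i)
    set y : ℝ := frobNorm (J i) * s with hy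
    have hy0 : 0 ≤ y := mul_nonneg (frobNorm_nonneg _) hs0
    have h1 : ((J i * W) * (J i * W)ᵀ).det ≤ (y ^ 2 / N) ^ N := by
      refine (my_det_le hN (J i * W)).trans ?_
      have h2 : frobNorm (J i * W) ^ 2 ≤ y ^ 2 :=
        pow_le_pow_left₀ (frobNorm_nonneg _) (frobNorm_mul_le (J i) W) 2
      gcongr
    have h3 : Real.sqrt ((y ^ 2 / N) ^ N) = y ^ N / K := by
      have : (y ^ 2 / (N : ℝ)) ^ N = (y ^ N) ^ 2 / (N : ℝ) ^ N := by
        rw [div_pow, pow_right_comm]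
      rw [this, Real.sqrt_div' ((y ^ N) ^ 2) (by positivity),
        Real.sqrt_sq (by positivity), hKdef, my_sqrt_pow_eq (le_of_lt hNR)]
    have h4 : y ^ N = a i * b i := by
      rw [ha, hb, hy]
      field_simp [mul_pow]
      ring
    calc Real.sqrt ((J i * W) * (J i * W)ᵀ).det ≤ Real.sqrt ((y ^ 2 / N) ^ N) :=
          Real.sqrt_le_sqrt h1
      _ = a i * b i / K := by rw [h3, h4]
  -- Cauchy-Schwarz and norm monotonicity
  have hCS : ∑ i, a i * b i ≤
      Real.sqrt (∑ i, a i ^ 2) * Real.sqrt (∑ i, b i ^ 2) :=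
    Real.sum_mul_le_sqrt_mul_sqrt _ _ _
  have hb2 : Real.sqrt (∑ i, b i ^ 2) ≤ T ^ ((N : ℝ) / 2) := by
    have h5 : ∑ i, b i ^ 2 ≤ T ^ N := by
      have : ∀ i : Fin n, b i ^ 2 = ((frobNorm (J i) * ‖x i‖) ^ 2) ^ N := by
        intro i; rw [hb, pow_right_comm]
      rw [Finset.sum_congr rfl fun i _ => this i, hT]
      exact my_sum_pow_le _ _ (fun i _ => by positivity) hN
    calc Real.sqrt (∑ i, b i ^ 2) ≤ Real.sqrt (T ^ N) := Real.sqrt_le_sqrt h5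
      _ = T ^ ((N : ℝ) / 2) := my_sqrt_pow_eq hT0 N
  have ha2 : ∑ i, a i ^ 2 = ∑ i, s ^ (2 * N) / ‖x i‖ ^ (2 * N) := by
    refine Finset.sum_congr rfl fun i _ => ?_
    rw [ha, div_pow, ← pow_mul, ← pow_mul, Nat.mul_comm]
  -- assemble
  have main : ∑ i, Real.sqrt ((J i * W) * (J i * W)ᵀ).det ≤
      Real.sqrt (∑ i, s ^ (2 * N) / ‖x i‖ ^ (2 * N)) * (T ^ ((N : ℝ) / 2) / K) := by
    calc ∑ i, Real.sqrt ((J i * W) * (J i * W)ᵀ).det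
        ≤ ∑ i, a i * b i / K := Finset.sum_le_sum fun i _ => claim1 i
      _ = (∑ i, a i * b i) / K := by rw [Finset.sum_div]
      _ ≤ Real.sqrt (∑ i, a i ^ 2) * Real.sqrt (∑ i, b i ^ 2) / K := by
          gcongr
      _ ≤ Real.sqrt (∑ i, a i ^ 2) * T ^ ((N : ℝ) / 2) / K := by
          gcongr
      _ = Real.sqrt (∑ i, s ^ (2 * N) / ‖x i‖ ^ (2 * N)) * (T ^ ((N : ℝ) / 2) / K) := by
          rw [ha2]; ring
  have hrw : ((n : ℝ) * ((1 / (n : ℝ)) * T) / (N : ℝ)) ^ ((N : ℝ) / 2)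
      = T ^ ((N : ℝ) / 2) / K := by
    have h6 : (n : ℝ) * ((1 / (n : ℝ)) * T) = T := by field_simp
    rw [h6, hKdef, Real.div_rpow hT0 (le_of_lt hNR)]
  rw [hrw, mul_assoc]
  refine mul_le_mul_of_nonneg_left ?_ (by positivity)
  exact main
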